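/- Let A be an abelian group in which every element has order dividing 2, let Γ be a group acting on A by automorphisms (inducing ring automorphisms r ↦ γ.r of ℤ[1/2][A]), let G ⊆ ℤ[1/2][A] be a finite set of idempotents that are pairwise orthogonal (p·q = 0 for distinct p,q ∈ G), and let Φ ⊆ Γ be a finite subset. Then there exists a finite set K ⊆ ℤ[1/2][A] of pairwise orthogonal idempotents with Σ_{p∈K} p = 1 such that for all p ∈ K, φ ∈ Φ, and q ∈ G, one has either (φ.p)·q = φ.p or (φ.p)·q = 0. -/

import Mathlib

/-!
Pull every `q ∈ G` back along every `γ ∈ Φ`: the elements `γ⁻¹.q` form a finite set `S` of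
idempotents. The minterms `∏_{e ∈ T} e * ∏_{e ∈ S \ T} (1 - e)`, `T ⊆ S`, are orthogonal
idempotents summing to `∏_{e ∈ S} (e + (1 - e)) = 1`, and each of them is either below or
orthogonal to every `e ∈ S`. Since `γ` acts by ring automorphisms,
`(γ.p) * q = γ.(p * γ⁻¹.q)`, which is `γ.p` or `0`.
-/

/-- `ℤ[1/2]`: the subring of `ℚ` of rationals whose denominator is a power of `2`. -/
def Zhalf : Subring ℚ where
  carrier := {q : ℚ | ∃ (m : ℤ) (n : ℕ), q = (m : ℚ) / 2 ^ n}
  zero_mem' := ⟨0, 0, by norm_num⟩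
  one_mem' := ⟨1, 0, by norm_num⟩
  add_mem' := by
    rintro a b ⟨m, n, rfl⟩ ⟨m', n', rfl⟩
    exact ⟨m * 2 ^ n' + m' * 2 ^ n, n + n', by push_cast [pow_add]; field_simp⟩
  mul_mem' := by
    rintro a b ⟨m, n, rfl⟩ ⟨m', n', rfl⟩
    exact ⟨m * m', n + n', by push_cast [pow_add]; field_simp⟩
  neg_mem' := by
    rintro a ⟨m, n, rfl⟩
    exact ⟨-m, n, by push_cast; ring⟩

/-- `o(p)`: the multiplicative order of `2` modulo `p`. -/
noncomputable def oOrd (p : ℕ) : ℕ := orderOf (2 : ZMod p)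

/-- `L(p)`: the set of `x` with `2 ≤ x ≤ p+1` congruent mod `p` to a power of `2`. -/
noncomputable def Lset (p : ℕ) : Finset ℕ :=
  letI : DecidablePred fun x : ℕ => ∃ i : ℕ, (2 : ZMod p) ^ i = (x : ZMod p) :=
    fun _ => Classical.propDecidable _
  (Finset.Icc 2 (p + 1)).filter fun x => ∃ i : ℕ, (2 : ZMod p) ^ i = (x : ZMod p)

/-- `r(p,x)`: the least natural number `r` with `2^r ≡ x (mod p)`. -/
noncomputable def rpx (p x : ℕ) : ℕ := sInf {r : ℕ | (2 : ZMod p) ^ r = (x : ZMod p)}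

/-- The value `F(p)` from the paper. -/
noncomputable def Fval (p : ℕ) : ℝ :=
  47 / 64 + (1 / 128) * (1 / (2 ^ oOrd p - 1)) +
    (1 / 64) * (2 ^ p / (2 ^ p - 1)) * ((2 : ℝ) ^ oOrd p / (2 ^ oOrd p - 1)) *
      ∑ x ∈ Lset p, (1 : ℝ) / 2 ^ (x + rpx p x)

/-- The ring automorphism of `ℤ[1/2][A]` induced by the action of `γ ∈ Γ` on `A`. -/
noncomputable def gact {A Γ : Type*} [CommGroup A] [Group Γ] (φ : Γ →* MulAut A) (γ : Γ)
    (r : MonoidAlgebra Zhalf A) : MonoidAlgebra Zhalf A :=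
  MonoidAlgebra.ofCoeff (Finsupp.mapDomain (⇑(φ γ)) r.coeff)

theorem IsIdempotentElem.finsetProd {ι M : Type*} [CommMonoid M] {s : Finset ι} {f : ι → M}
    (h : ∀ i ∈ s, IsIdempotentElem (f i)) : IsIdempotentElem (∏ i ∈ s, f i) :=
  Finset.prod_induction _ _ (fun _ _ ↦ .mul) .one h

namespace Finset

variable {R : Type*} [CommRing R] [DecidableEq R]

def minterm (S T : Finset R) : R := (∏ e ∈ T, e) * ∏ e ∈ S \ T, (1 - e)

variable {S T : Finset R} {e : R}

theorem minterm_mul_of_mem (hS : ∀ e ∈ S, IsIdempotentElem e) (hT : T ⊆ S) (he : e ∈ T) :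
    minterm S T * e = minterm S T := by
  rw [minterm, ← mul_prod_erase T _ he]
  linear_combination (∏ x ∈ T.erase e, x) * (∏ x ∈ S \ T, (1 - x)) * (hS e (hT he)).eq

theorem minterm_mul_of_mem_sdiff (hS : ∀ e ∈ S, IsIdempotentElem e) (he : e ∈ S \ T) :
    minterm S T * e = 0 := by
  rw [minterm, ← mul_prod_erase (S \ T) _ he]
  linear_combination -(∏ x ∈ T, x) * (∏ x ∈ (S \ T).erase e, (1 - x)) * (hS e (mem_sdiff.1 he).1).eq

theorem isIdempotentElem_minterm (hS : ∀ e ∈ S, IsIdempotentElem e) (hT : T ⊆ S) :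
    IsIdempotentElem (minterm S T) :=
  .mul (.finsetProd fun e he ↦ hS e (hT he))
    (.finsetProd fun e he ↦ (hS e (mem_sdiff.1 he).1).one_sub)

theorem minterm_mul_minterm_of_ne (hS : ∀ e ∈ S, IsIdempotentElem e) {T' : Finset R}
    (hT : T ⊆ S) (hT' : T' ⊆ S) (hne : T ≠ T') : minterm S T * minterm S T' = 0 := by
  wlog h : ¬ T ⊆ T' generalizing T T'
  · rw [mul_comm]
    exact this hT' hT hne.symm fun h' ↦ hne (Subset.antisymm (not_not.1 h) h')
  obtain ⟨e, heT, heT'⟩ := not_subset.1 h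
  rw [← minterm_mul_of_mem hS hT heT, mul_right_comm, mul_assoc,
    minterm_mul_of_mem_sdiff hS (mem_sdiff.2 ⟨hT heT, heT'⟩), mul_zero]

theorem sum_minterm (S : Finset R) : ∑ T ∈ S.powerset, minterm S T = 1 := by
  simp_rw [minterm, ← prod_add, add_sub_cancel, prod_const_one]

end Finset

namespace Finset

theorem sum_image_filter_ne_zero_of_orthogonal {ι R : Type*} [Semiring R] [DecidableEq R]
    {s : Finset ι} {f : ι → R} (hidem : ∀ i ∈ s, IsIdempotentElem (f i))
    (horth : ∀ i ∈ s, ∀ j ∈ s, i ≠ j → f i * f j = 0) :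
    ∑ x ∈ (s.filter (f · ≠ 0)).image f, x = ∑ i ∈ s, f i := by
  rw [sum_image, sum_filter_ne_zero]
  intro i hi j hj hij
  obtain ⟨hi, hi0⟩ := mem_filter.1 hi
  by_contra hne
  refine hi0 ?_
  calc f i = f i * f j := by rw [← hij, (hidem i hi).eq]
    _ = 0 := horth i hi j (mem_filter.1 hj).1 hne

variable {R : Type*} [CommRing R] [DecidableEq R]

theorem exists_orthogonal_idempotents_refining (S : Finset R)
    (hS : ∀ e ∈ S, IsIdempotentElem e) :
    ∃ K : Finset R, (∀ p ∈ K, IsIdempotentElem p) ∧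
      (∀ p ∈ K, ∀ q ∈ K, p ≠ q → p * q = 0) ∧
      ∑ p ∈ K, p = 1 ∧
      ∀ p ∈ K, ∀ e ∈ S, p * e = p ∨ p * e = 0 := by
  refine ⟨(S.powerset.filter (minterm S · ≠ 0)).image (minterm S), ?_, ?_, ?_, ?_⟩
  · simp only [mem_image, mem_filter, mem_powerset]
    rintro _ ⟨T, ⟨hT, -⟩, rfl⟩
    exact isIdempotentElem_minterm hS hT
  · simp only [mem_image, mem_filter, mem_powerset]
    rintro _ ⟨T, ⟨hT, -⟩, rfl⟩ _ ⟨T', ⟨hT', -⟩, rfl⟩ hne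
    exact minterm_mul_minterm_of_ne hS hT hT' (ne_of_apply_ne _ hne)
  · rw [sum_image_filter_ne_zero_of_orthogonal
      (fun T hT ↦ isIdempotentElem_minterm hS (mem_powerset.1 hT))
      (fun T hT T' hT' ↦ minterm_mul_minterm_of_ne hS (mem_powerset.1 hT) (mem_powerset.1 hT')),
      sum_minterm]
  · simp only [mem_image, mem_filter, mem_powerset]
    rintro _ ⟨T, ⟨hT, -⟩, rfl⟩ e he
    by_cases heT : e ∈ T
    · exact .inl (minterm_mul_of_mem hS hT heT)
    · exact .inr (minterm_mul_of_mem_sdiff hS (mem_sdiff.2 ⟨he, heT⟩))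

end Finset

section GroupAction

variable {A Γ : Type*} [CommGroup A] [Group Γ] (φ : Γ →* MulAut A) (γ : Γ)

theorem gact_eq_mapDomainRingHom :
    gact φ γ = MonoidAlgebra.mapDomainRingHom Zhalf (φ γ : A →* A) := rfl

theorem gact_gact_inv (q : MonoidAlgebra Zhalf A) : gact φ γ (gact φ γ⁻¹ q) = q := by
  have h : (φ γ : A →* A).comp (φ γ⁻¹ : A →* A) = .id A := by
    ext a; simp
  simp only [gact_eq_mapDomainRingHom, ← RingHom.comp_apply,
    ← MonoidAlgebra.mapDomainRingHom_comp, h, MonoidAlgebra.mapDomainRingHom_id, RingHom.id_apply]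

theorem gact_mul_eq (p q : MonoidAlgebra Zhalf A) :
    gact φ γ p * q = gact φ γ (p * gact φ γ⁻¹ q) := by
  rw [gact_eq_mapDomainRingHom, map_mul, ← gact_eq_mapDomainRingHom, gact_gact_inv]

end GroupAction

theorem statement15_general (A : Type) [CommGroup A]
    (Γ : Type) [Group Γ] (φ : Γ →* MulAut A)
    (G : Finset (MonoidAlgebra Zhalf A))
    (hidem : ∀ p ∈ G, p * p = p)
    (Φ : Finset Γ) :
    ∃ K : Finset (MonoidAlgebra Zhalf A),
      (∀ p ∈ K, p * p = p) ∧
      (∀ p ∈ K, ∀ q ∈ K, p ≠ q → p * q = 0) ∧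
      (∑ p ∈ K, p) = 1 ∧
      ∀ p ∈ K, ∀ γ ∈ Φ, ∀ q ∈ G,
        gact φ γ p * q = gact φ γ p ∨ gact φ γ p * q = 0 := by
  classical
  obtain ⟨K, hKidem, hKorth, hKsum, hKrefines⟩ :=
    Finset.exists_orthogonal_idempotents_refining ((Φ ×ˢ G).image fun x ↦ gact φ x.1⁻¹ x.2) <| by
      simp only [Finset.mem_image, Finset.mem_product]
      rintro _ ⟨⟨γ, q⟩, ⟨-, hq⟩, rfl⟩
      rw [IsIdempotentElem, gact_eq_mapDomainRingHom, ← map_mul, hidem q hq]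
  refine ⟨K, hKidem, hKorth, hKsum, fun p hp γ hγ q hq ↦ ?_⟩
  rcases hKrefines p hp (gact φ γ⁻¹ q)
    (Finset.mem_image.2 ⟨(γ, q), Finset.mem_product.2 ⟨hγ, hq⟩, rfl⟩) with h | h
  · exact .inl (by rw [gact_mul_eq, h])
  · exact .inr (by rw [gact_mul_eq, h, gact_eq_mapDomainRingHom, map_zero])

/-- STATEMENT 15: given a finite set `G` of pairwise orthogonal idempotents of `ℤ[1/2][A]`
and a finite `Φ ⊆ Γ`, there is a finite set `K` of pairwise orthogonal idempotents summing
to `1` such that for all `p ∈ K`, `φ' ∈ Φ`, `q ∈ G`: `(φ'.p)·q = φ'.p` or `(φ'.p)·q = 0`. -/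
theorem statement15 (A : Type) [CommGroup A] (hA : ∀ a : A, a ^ 2 = 1)
    (Γ : Type) [Group Γ] (φ : Γ →* MulAut A)
    (G : Finset (MonoidAlgebra Zhalf A))
    (hidem : ∀ p ∈ G, p * p = p)
    (horth : ∀ p ∈ G, ∀ q ∈ G, p ≠ q → p * q = 0)
    (Φ : Finset Γ) :
    ∃ K : Finset (MonoidAlgebra Zhalf A),
      (∀ p ∈ K, p * p = p) ∧
      (∀ p ∈ K, ∀ q ∈ K, p ≠ q → p * q = 0) ∧
      (∑ p ∈ K, p) = 1 ∧
      ∀ p ∈ K, ∀ γ ∈ Φ, ∀ q ∈ G,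
        gact φ γ p * q = gact φ γ p ∨ gact φ γ p * q = 0 :=
  statement15_general A Γ φ G hidem Φ
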